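/- arXiv:1507.03512 — 5 statements merged into one kernel-verified Lean document; each statement's English description precedes it below -/
import Mathlib

section
/- There exists an integer k₀ ≥ 3 such that for every integer k ≥ k₀ and every real β ≥ k·ln 2 − 10·ln k the following holds in the clause message setup: if P = {x} and ν_j ≥ 1 − exp(−kβ/2) for every j ∈ {1,…,k} with j ≠ x, then N_x(1) ≥ exp(0.99·β)·N_x(−1). -/
/-- The (unnormalized) Belief Propagation message sent from a clause with positive-literal
positions `P` to the variable at position `x`, evaluated at the value `b`
(`true` stands for `1`, `false` for `-1`):
`N_x(b) = Σ_{s : s_x = b} ψ_β(s) ∏_{j ≠ x} w_j(s_j)` with `w_j(1) = ν j`, `w_j(-1) = 1 - ν j`,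
and `ψ_β(s) = 1` if `s` satisfies the clause and `exp (-β)` otherwise. -/
noncomputable def Nmsg (k : ℕ) (β : ℝ) (P : Finset (Fin k)) (ν : Fin k → ℝ)
    (x : Fin k) (b : Bool) : ℝ :=
  ∑ s ∈ Finset.univ.filter (fun s : Fin k → Bool => s x = b),
    (if ∃ j, (j ∈ P ∧ s j = true) ∨ (j ∉ P ∧ s j = false) then (1 : ℝ)
      else Real.exp (-β)) *
    ∏ j ∈ Finset.univ.erase x, (if s j then ν j else 1 - ν j)

set_option maxHeartbeats 1000000
lemma sum_filter_prod {k : ℕ} (x : Fin k) (b : Bool) (g : Fin k → Bool → ℝ) :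
    ∑ s ∈ Finset.univ.filter (fun s : Fin k → Bool => s x = b),
      ∏ j ∈ Finset.univ.erase x, g j (s j)
    = ∏ j ∈ Finset.univ.erase x, (g j true + g j false) := by
  set t : Fin k → Finset Bool := fun j => if j = x then {b} else Finset.univ with ht
  set f : Fin k → Bool → ℝ := fun j y => if j = x then (1 : ℝ) else g j y with hf
  have hset : Finset.univ.filter (fun s : Fin k → Bool => s x = b) = Fintype.piFinset t := by
    ext s
    simp only [Finset.mem_filter, Finset.mem_univ, true_and, Fintype.mem_piFinset, ht]
    constructor
    · intro h j
      by_cases hj : j = x <;> simp [hj, h]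
    · intro h
      have := h x
      simpa using this
  rw [hset]
  have h1 : ∀ s ∈ Fintype.piFinset t,
      ∏ j ∈ Finset.univ.erase x, g j (s j) = ∏ j, f j (s j) := by
    intro s _
    rw [← Finset.mul_prod_erase Finset.univ (fun j => f j (s j)) (Finset.mem_univ x)]
    have hfx : f x (s x) = 1 := by simp [hf]
    rw [hfx, one_mul]
    refine Finset.prod_congr rfl fun j hj => ?_
    have hjx : j ≠ x := Finset.ne_of_mem_erase hj
    simp [hf, hjx]
  rw [Finset.sum_congr rfl h1, ← Finset.prod_univ_sum t f]
  rw [← Finset.mul_prod_erase Finset.univ (fun j => ∑ y ∈ t j, f j y) (Finset.mem_univ x)]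
  have hx : ∑ y ∈ t x, f x y = 1 := by simp [ht, hf]
  rw [hx, one_mul]
  refine Finset.prod_congr rfl fun j hj => ?_
  have hjx : j ≠ x := Finset.ne_of_mem_erase hj
  simp [ht, hf, hjx]

/-- There is `k₀ ≥ 3` such that for `k ≥ k₀`, `β ≥ k ln 2 - 10 ln k`: if `P = {x}` and
`ν j ≥ 1 - exp (-kβ/2)` for all `j ≠ x`, then `N_x(1) ≥ exp (0.99 β) N_x(-1)`. -/
theorem stmt_4 :
    ∃ k₀ : ℕ, 3 ≤ k₀ ∧ ∀ k : ℕ, k₀ ≤ k → ∀ β : ℝ, 0 ≤ β →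
      (k : ℝ) * Real.log 2 - 10 * Real.log k ≤ β →
      ∀ (P : Finset (Fin k)) (x : Fin k) (ν : Fin k → ℝ),
        (∀ j, ν j ∈ Set.Icc (0 : ℝ) 1) → P = {x} →
        (∀ j, j ≠ x → 1 - Real.exp (-((k : ℝ) * β / 2)) ≤ ν j) →
        Real.exp (0.99 * β) * Nmsg k β P ν x false ≤ Nmsg k β P ν x true := by
  refine ⟨12000, by norm_num, ?_⟩
  intro k hk β hβ0 hβ P x ν hν hP hν2
  subst hP
  have hk' : (12000 : ℝ) ≤ (k : ℝ) := by exact_mod_cast hk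
  set ε := Real.exp (-((k : ℝ) * β / 2)) with hεdef
  have hε0 : 0 ≤ ε := (Real.exp_pos _).le
  have hε1 : ε ≤ 1 := Real.exp_le_one_iff.mpr (neg_nonpos.mpr (by positivity))
  -- N(true) = 1
  have htrue : Nmsg k β {x} ν x true = 1 := by
    unfold Nmsg
    have h1 : ∀ s ∈ Finset.univ.filter (fun s : Fin k → Bool => s x = true),
        (if ∃ j, (j ∈ ({x} : Finset (Fin k)) ∧ s j = true) ∨
            (j ∉ ({x} : Finset (Fin k)) ∧ s j = false) then (1 : ℝ) else Real.exp (-β)) *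
          ∏ j ∈ Finset.univ.erase x, (if s j then ν j else 1 - ν j)
        = ∏ j ∈ Finset.univ.erase x, (if s j then ν j else 1 - ν j) := by
      intro s hs
      rw [if_pos ⟨x, Or.inl ⟨Finset.mem_singleton_self x, (Finset.mem_filter.mp hs).2⟩⟩, one_mul]
    rw [Finset.sum_congr rfl h1,
      sum_filter_prod x true (fun j y => if y then ν j else 1 - ν j)]
    have h2 : ∀ j ∈ Finset.univ.erase x,
        ((if true then ν j else 1 - ν j) + (if false then ν j else 1 - ν j)) = 1 := by
      intro j _
      simp
    rw [Finset.prod_congr rfl h2, Finset.prod_const_one]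
  -- N(false)
  set s₀ : Fin k → Bool := fun j => decide (j ≠ x) with hs₀def
  have hs₀x : s₀ x = false := by simp [hs₀def]
  have hs₀j : ∀ j, j ≠ x → s₀ j = true := by intro j hj; simp [hs₀def, hj]
  set PP := ∏ j ∈ Finset.univ.erase x, ν j with hPPdef
  have hfalse : Nmsg k β {x} ν x false = Real.exp (-β) * PP + (1 - PP) := by
    unfold Nmsg
    have hmem : s₀ ∈ Finset.univ.filter (fun s : Fin k → Bool => s x = false) := by
      simp [hs₀x]
    rw [← Finset.add_sum_erase _ _ hmem]
    have hterm : (if ∃ j, (j ∈ ({x} : Finset (Fin k)) ∧ s₀ j = true) ∨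
            (j ∉ ({x} : Finset (Fin k)) ∧ s₀ j = false) then (1 : ℝ) else Real.exp (-β)) *
          ∏ j ∈ Finset.univ.erase x, (if s₀ j then ν j else 1 - ν j)
        = Real.exp (-β) * PP := by
      have hcond : ¬ ∃ j, (j ∈ ({x} : Finset (Fin k)) ∧ s₀ j = true) ∨
          (j ∉ ({x} : Finset (Fin k)) ∧ s₀ j = false) := by
        rintro ⟨j, (⟨hj1, hj2⟩ | ⟨hj1, hj2⟩)⟩
        · rw [Finset.mem_singleton] at hj1
          subst hj1
          rw [hs₀x] at hj2
          exact Bool.false_ne_true hj2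
        · rw [Finset.mem_singleton] at hj1
          rw [hs₀j j hj1] at hj2
          simp at hj2
      rw [if_neg hcond]
      congr 1
      refine Finset.prod_congr rfl fun j hj => ?_
      rw [hs₀j j (Finset.ne_of_mem_erase hj), if_pos rfl]
    rw [hterm]
    congr 1
    have h3 : ∀ s ∈ (Finset.univ.filter (fun s : Fin k → Bool => s x = false)).erase s₀,
        (if ∃ j, (j ∈ ({x} : Finset (Fin k)) ∧ s j = true) ∨
            (j ∉ ({x} : Finset (Fin k)) ∧ s j = false) then (1 : ℝ) else Real.exp (-β)) *
          ∏ j ∈ Finset.univ.erase x, (if s j then ν j else 1 - ν j)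
        = ∏ j ∈ Finset.univ.erase x, (if s j then ν j else 1 - ν j) := by
      intro s hs
      obtain ⟨hne, hsf⟩ := Finset.mem_erase.mp hs
      have hsx : s x = false := (Finset.mem_filter.mp hsf).2
      obtain ⟨j, hj⟩ := Function.ne_iff.mp hne
      have hjx : j ≠ x := by
        rintro rfl
        exact hj (hsx.trans hs₀x.symm)
      have hsj : s j = false := by
        rw [hs₀j j hjx] at hj
        simpa using hj
      rw [if_pos ⟨j, Or.inr ⟨by simp [hjx], hsj⟩⟩, one_mul]
    rw [Finset.sum_congr rfl h3]
    have h4 : ∑ s ∈ (Finset.univ.filter (fun s : Fin k → Bool => s x = false)).erase s₀,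
          ∏ j ∈ Finset.univ.erase x, (if s j then ν j else 1 - ν j)
        = (∑ s ∈ Finset.univ.filter (fun s : Fin k → Bool => s x = false),
            ∏ j ∈ Finset.univ.erase x, (if s j then ν j else 1 - ν j))
          - ∏ j ∈ Finset.univ.erase x, (if s₀ j then ν j else 1 - ν j) := by
      rw [← Finset.add_sum_erase _ _ hmem]
      ring
    rw [h4, sum_filter_prod x false (fun j y => if y then ν j else 1 - ν j)]
    have h2 : ∀ j ∈ Finset.univ.erase x,
        ((if true then ν j else 1 - ν j) + (if false then ν j else 1 - ν j)) = 1 := by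
      intro j _
      simp
    rw [Finset.prod_congr rfl h2, Finset.prod_const_one]
    have h5 : ∏ j ∈ Finset.univ.erase x, (if s₀ j then ν j else 1 - ν j) = PP :=
      Finset.prod_congr rfl fun j hj => by
        rw [hs₀j j (Finset.ne_of_mem_erase hj), if_pos rfl]
    rw [h5]
  -- bounds on PP
  have hcard : (Finset.univ.erase x).card = k - 1 := by
    rw [Finset.card_erase_of_mem (Finset.mem_univ x), Finset.card_univ, Fintype.card_fin]
  have hPPlb : 1 - (k : ℝ) * ε ≤ PP := by
    have h1 : ((1 : ℝ) - ε) ^ (k - 1) ≤ PP := by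
      rw [hPPdef, ← hcard, ← Finset.prod_const]
      refine Finset.prod_le_prod (fun j _ => by linarith) fun j hj => ?_
      exact hν2 j (Finset.ne_of_mem_erase hj)
    have h2 : 1 + ((k - 1 : ℕ) : ℝ) * (-ε) ≤ (1 + -ε) ^ (k - 1) :=
      one_add_mul_le_pow (by linarith) (k - 1)
    have h3 : ((k - 1 : ℕ) : ℝ) = (k : ℝ) - 1 := by
      have : 1 ≤ k := by omega
      push_cast [Nat.cast_sub this]
      ring
    rw [h3] at h2
    have : (1 : ℝ) + -ε = 1 - ε := by ring
    rw [this] at h2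
    nlinarith
  have hPP1 : PP ≤ 1 := by
    rw [hPPdef]
    exact Finset.prod_le_one (fun j _ => (hν j).1) (fun j _ => (hν j).2)
  -- β ≥ k/2
  have hβk : (k : ℝ) / 2 ≤ β := by
    refine le_trans ?_ hβ
    have hkpos : (0 : ℝ) < (k : ℝ) := by linarith
    have hsqrt : (109 : ℝ) ≤ Real.sqrt k := by
      have h109 : (109 : ℝ) = Real.sqrt (109 ^ 2) := by
        rw [Real.sqrt_sq (by norm_num)]
      rw [h109]
      exact Real.sqrt_le_sqrt (by norm_num; linarith)
    have hsq : Real.sqrt k * Real.sqrt k = (k : ℝ) := Real.mul_self_sqrt hkpos.le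
    have hlogk : Real.log k ≤ 2 * Real.sqrt k := by
      have h1 : Real.log (Real.sqrt k) = Real.log k / 2 := Real.log_sqrt hkpos.le
      have h2 : Real.log (Real.sqrt k) ≤ Real.sqrt k - 1 :=
        Real.log_le_sub_one_of_pos (Real.sqrt_pos.mpr hkpos)
      nlinarith [Real.sqrt_nonneg (k : ℝ)]
    have hlog2 : (0.6931471803 : ℝ) < Real.log 2 := Real.log_two_gt_d9
    nlinarith [Real.sqrt_nonneg (k : ℝ)]
  have hβ6000 : (6000 : ℝ) ≤ β := by linarith
  -- exp(-1) ≤ 1/2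
  have hexpneg1 : Real.exp (-1) ≤ 1 / 2 := by
    have hmul : Real.exp (-1) * Real.exp 1 = 1 := by
      rw [← Real.exp_add]; norm_num
    nlinarith [Real.exp_one_gt_d9, Real.exp_pos (-1 : ℝ)]
  -- the two exponential bounds
  have hA : Real.exp (0.99 * β) * Real.exp (-β) ≤ 1 / 2 := by
    rw [← Real.exp_add]
    refine le_trans (Real.exp_le_exp.mpr ?_) hexpneg1
    nlinarith
  have hB : (k : ℝ) * (Real.exp (0.99 * β) * ε) ≤ 1 / 2 := by
    have hkexp : (k : ℝ) ≤ Real.exp k := by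
      have := Real.add_one_le_exp (k : ℝ)
      linarith
    have h1 : Real.exp (0.99 * β) * ε = Real.exp (0.99 * β - (k : ℝ) * β / 2) := by
      rw [hεdef, ← Real.exp_add]
      ring_nf
    rw [h1]
    have h2 : (k : ℝ) * Real.exp (0.99 * β - (k : ℝ) * β / 2)
        ≤ Real.exp (k : ℝ) * Real.exp (0.99 * β - (k : ℝ) * β / 2) := by
      exact mul_le_mul_of_nonneg_right hkexp (Real.exp_pos _).le
    refine le_trans h2 ?_
    rw [← Real.exp_add]
    refine le_trans (Real.exp_le_exp.mpr ?_) hexpneg1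
    have h3 : 0.99 * β - (k : ℝ) * β / 2 ≤ ((k : ℝ) / 2) * (0.99 - (k : ℝ) / 2) := by
      have hneg : 0.99 - (k : ℝ) / 2 ≤ 0 := by linarith
      nlinarith
    nlinarith
  -- finish
  rw [htrue, hfalse]
  have key : Real.exp (-β) * PP + (1 - PP) ≤ Real.exp (-β) + (k : ℝ) * ε := by
    have hexpβ1 : Real.exp (-β) ≤ 1 := Real.exp_le_one_iff.mpr (by linarith)
    have hh1 : (1 - PP) * (1 - Real.exp (-β)) ≤ (k : ℝ) * ε * (1 - Real.exp (-β)) :=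
      mul_le_mul_of_nonneg_right (by linarith) (by linarith)
    have hh2 : 0 ≤ (k : ℝ) * ε * Real.exp (-β) :=
      mul_nonneg (mul_nonneg (by positivity) hε0) (Real.exp_pos _).le
    nlinarith [hh1, hh2]
  calc Real.exp (0.99 * β) * (Real.exp (-β) * PP + (1 - PP))
      ≤ Real.exp (0.99 * β) * (Real.exp (-β) + (k : ℝ) * ε) :=
        mul_le_mul_of_nonneg_left key (Real.exp_pos _).le
    _ = Real.exp (0.99 * β) * Real.exp (-β) + (k : ℝ) * (Real.exp (0.99 * β) * ε) := by ring
    _ ≤ 1 / 2 + 1 / 2 := add_le_add hA hB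
    _ = 1 := by norm_num
end

section
/- There exists an integer k₀ ≥ 3 such that for every integer k ≥ k₀, every real β ≥ k·ln 2 − 10·ln k and every integer p ≥ 1 the following holds in the clause message setup: if at least p of the indices j ∈ P with j ≠ x satisfy ν_j ≥ 1 − exp(−kβ/2), then N_x(1) ≥ exp(−exp(−p·k·β/3))·N_x(−1). -/
/-!
Write `W(s) = ∏_{j ≠ x} w_j(s_j)`; for each fixed value of `s_x` these weights form a probability
distribution, and `ψ_β ≤ 1`, so every message `N_x(b)` is at most `1`, with equality when the
literal at `x` is already satisfied by `b`. Otherwise only the unique violating assignment `s₀` has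
`ψ_β(s₀) < 1`, so `N_x(b) ≥ 1 - W(s₀)`, and `W(s₀) ≤ exp(-kβ/2)^p` because `s₀` takes the unlikely
value at the `p` well-biased positions. The claim then reduces to
`exp(-exp(-u/3)) ≤ 1 - exp(-u/2)` for `u = pkβ`, which holds once `u ≥ 6`; the bound on `β` makes
`β ≥ 1` for `k ≥ 3600`.
-/

open scoped Classical

open Finset Real

section ClauseMessage

variable {ι : Type*}

noncomputable def clauseFactor (β : ℝ) (P : Finset ι) (s : ι → Bool) : ℝ :=
  if ∃ j, (j ∈ P ∧ s j = true) ∨ (j ∉ P ∧ s j = false) then 1 else exp (-β)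

noncomputable def msgWeight [Fintype ι] [DecidableEq ι] (ν : ι → ℝ) (x : ι) (s : ι → Bool) : ℝ :=
  ∏ j ∈ univ.erase x, if s j then ν j else 1 - ν j

def violatingAssignment [DecidableEq ι] (P : Finset ι) : ι → Bool := fun j => decide (j ∉ P)

lemma clauseFactor_nonneg (β : ℝ) (P : Finset ι) (s : ι → Bool) : 0 ≤ clauseFactor β P s := by
  unfold clauseFactor; split_ifs <;> positivity

lemma clauseFactor_le_one {β : ℝ} (hβ : 0 ≤ β) (P : Finset ι) (s : ι → Bool) :
    clauseFactor β P s ≤ 1 := by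
  unfold clauseFactor; split_ifs
  · rfl
  · exact exp_le_one_iff.mpr (neg_nonpos.mpr hβ)

lemma clauseFactor_eq_one_of_ne_violatingAssignment [DecidableEq ι] (β : ℝ) {P : Finset ι}
    {s : ι → Bool} (hs : s ≠ violatingAssignment P) : clauseFactor β P s = 1 := by
  obtain ⟨j, hj⟩ := Function.ne_iff.mp hs
  refine if_pos ⟨j, ?_⟩
  by_cases hjP : j ∈ P <;> simp_all [violatingAssignment]

lemma sum_filter_prod_erase_eq_one {R : Type*} [CommSemiring R] [Fintype ι] [DecidableEq ι]
    (x : ι) (b : Bool) (f : ι → Bool → R) (hf : ∀ j, f j true + f j false = 1) :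
    ∑ s ∈ univ.filter (fun s : ι → Bool => s x = b), ∏ j ∈ univ.erase x, f j (s j) = 1 := by
  -- Fixing `s x = b` amounts to replacing the factor at `x` by the indicator of `b`.
  set g : ι → Bool → R := fun j c => if j = x then (if c = b then 1 else 0) else f j c
  have hprod (s : ι → Bool) :
      ∏ j, g j (s j) = if s x = b then ∏ j ∈ univ.erase x, f j (s j) else 0 := by
    rw [← mul_prod_erase univ _ (mem_univ x),
      prod_congr rfl fun j hj => if_neg (ne_of_mem_erase hj)]
    split_ifs <;> simp_all [g]
  rw [sum_filter, ← sum_congr rfl fun s _ => hprod s, ← Fintype.prod_sum]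
  refine prod_eq_one fun j _ => ?_
  rw [Fintype.sum_bool]
  by_cases hj : j = x
  · subst hj; cases b <;> simp [g]
  · simpa [g, hj] using hf j

lemma ite_one_sub_mem_Icc {a : ℝ} (ha : a ∈ Set.Icc (0 : ℝ) 1) (c : Bool) :
    (if c then a else 1 - a) ∈ Set.Icc (0 : ℝ) 1 := by
  split_ifs
  exacts [ha, ⟨sub_nonneg.mpr ha.2, sub_le_self 1 ha.1⟩]

variable [Fintype ι] [DecidableEq ι] {ν : ι → ℝ}

lemma msgWeight_nonneg (hν : ∀ j, ν j ∈ Set.Icc (0 : ℝ) 1) (x : ι) (s : ι → Bool) :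
    0 ≤ msgWeight ν x s :=
  prod_nonneg fun j _ => (ite_one_sub_mem_Icc (hν j) (s j)).1

lemma sum_msgWeight (ν : ι → ℝ) (x : ι) (b : Bool) :
    ∑ s ∈ univ.filter (fun s : ι → Bool => s x = b), msgWeight ν x s = 1 :=
  sum_filter_prod_erase_eq_one x b (fun j c => if c then ν j else 1 - ν j) fun j => by simp

lemma msgWeight_violatingAssignment_le {P : Finset ι} {x : ι} {ε : ℝ} {p : ℕ}
    (hν : ∀ j, ν j ∈ Set.Icc (0 : ℝ) 1) (hε0 : 0 ≤ ε) (hε1 : ε ≤ 1)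
    (hp : p ≤ ((P.erase x).filter fun j => 1 - ε ≤ ν j).card) :
    msgWeight ν x (violatingAssignment P) ≤ ε ^ p := by
  set S := (P.erase x).filter fun j => 1 - ε ≤ ν j
  set w : ι → ℝ := fun j => if violatingAssignment P j then ν j else 1 - ν j
  have hw0 (j : ι) : 0 ≤ w j := (ite_one_sub_mem_Icc (hν j) _).1
  have hw1 (j : ι) : w j ≤ 1 := (ite_one_sub_mem_Icc (hν j) _).2
  have hS : S ⊆ univ.erase x := fun j hj =>
    mem_erase.mpr ⟨ne_of_mem_erase (mem_filter.mp hj).1, mem_univ j⟩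
  have hwS : ∀ j ∈ S, w j ≤ ε := fun j hj => by
    obtain ⟨hjP, hjν⟩ := mem_filter.mp hj
    simp only [w, violatingAssignment, mem_of_mem_erase hjP, not_true, decide_false,
      Bool.false_eq_true, if_false]
    linarith
  calc msgWeight ν x (violatingAssignment P) = ∏ j ∈ univ.erase x, w j := rfl
    _ ≤ ∏ j ∈ S, w j := prod_le_prod_of_subset_of_le_one hS (fun j _ => hw0 j) fun j _ _ => hw1 j
    _ ≤ ∏ _j ∈ S, ε := prod_le_prod (fun j _ => hw0 j) hwS
    _ = ε ^ S.card := prod_const ε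
    _ ≤ ε ^ p := pow_le_pow_of_le_one hε0 hε1 hp

end ClauseMessage

section Message

lemma Nmsg_eq_sum {k : ℕ} (β : ℝ) (P : Finset (Fin k)) (ν : Fin k → ℝ) (x : Fin k) (b : Bool) :
    Nmsg k β P ν x b =
      ∑ s ∈ univ.filter (fun s : Fin k → Bool => s x = b), clauseFactor β P s * msgWeight ν x s :=
  sum_congr rfl fun s _ => by rw [clauseFactor]; congr

variable {k : ℕ} {β : ℝ} {P : Finset (Fin k)} {ν : Fin k → ℝ} {x : Fin k}

lemma Nmsg_nonneg (hν : ∀ j, ν j ∈ Set.Icc (0 : ℝ) 1) (b : Bool) : 0 ≤ Nmsg k β P ν x b :=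
  Nmsg_eq_sum β P ν x b ▸ sum_nonneg fun s _ =>
    mul_nonneg (clauseFactor_nonneg β P s) (msgWeight_nonneg hν x s)

lemma Nmsg_le_one (hβ : 0 ≤ β) (hν : ∀ j, ν j ∈ Set.Icc (0 : ℝ) 1) (b : Bool) :
    Nmsg k β P ν x b ≤ 1 := by
  rw [Nmsg_eq_sum, ← sum_msgWeight ν x b]
  exact sum_le_sum fun s _ =>
    mul_le_of_le_one_left (msgWeight_nonneg hν x s) (clauseFactor_le_one hβ P s)

lemma Nmsg_eq_one {b : Bool} (hb : (x ∈ P ∧ b = true) ∨ (x ∉ P ∧ b = false)) :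
    Nmsg k β P ν x b = 1 := by
  rw [Nmsg_eq_sum, ← sum_msgWeight ν x b]
  refine sum_congr rfl fun s hs => ?_
  have hsx : s x = b := (mem_filter.mp hs).2
  rw [clauseFactor, if_pos ⟨x, hsx ▸ hb⟩, one_mul]

lemma one_sub_msgWeight_violatingAssignment_le_Nmsg (hν : ∀ j, ν j ∈ Set.Icc (0 : ℝ) 1)
    (b : Bool) : 1 - msgWeight ν x (violatingAssignment P) ≤ Nmsg k β P ν x b := by
  set s₀ := violatingAssignment P
  set F := univ.filter fun s : Fin k → Bool => s x = b
  have hterm (s : Fin k → Bool) :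
      msgWeight ν x s - (if s = s₀ then msgWeight ν x s else 0) ≤
        clauseFactor β P s * msgWeight ν x s := by
    by_cases hs : s = s₀
    · rw [if_pos hs, sub_self]
      exact mul_nonneg (clauseFactor_nonneg β P s) (msgWeight_nonneg hν x s)
    · rw [if_neg hs, sub_zero, clauseFactor_eq_one_of_ne_violatingAssignment β hs, one_mul]
  have hs₀ : ∑ s ∈ F, (if s = s₀ then msgWeight ν x s else 0) ≤ msgWeight ν x s₀ := by
    rw [sum_ite_eq']
    split_ifs
    exacts [le_rfl, msgWeight_nonneg hν x s₀]
  calc 1 - msgWeight ν x s₀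
      ≤ ∑ s ∈ F, msgWeight ν x s - ∑ s ∈ F, (if s = s₀ then msgWeight ν x s else 0) := by
        rw [sum_msgWeight]; linarith
    _ = ∑ s ∈ F, (msgWeight ν x s - if s = s₀ then msgWeight ν x s else 0) :=
        (sum_sub_distrib _ _).symm
    _ ≤ Nmsg k β P ν x b := by rw [Nmsg_eq_sum]; exact sum_le_sum fun s _ => hterm s

end Message

lemma exp_neg_le_one_sub_half {δ : ℝ} (h0 : 0 ≤ δ) (h1 : δ ≤ 1) : exp (-δ) ≤ 1 - δ / 2 := by
  have h : exp (-δ) * (1 + δ) ≤ 1 := by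
    calc exp (-δ) * (1 + δ) ≤ exp (-δ) * exp δ := by gcongr; linarith [add_one_le_exp δ]
      _ = 1 := by rw [← exp_add, neg_add_cancel, exp_zero]
  nlinarith [exp_pos (-δ)]

lemma exp_neg_exp_le_one_sub_exp {u : ℝ} (hu : 6 ≤ u) :
    exp (-exp (-(u / 3))) ≤ 1 - exp (-(u / 2)) := by
  have hδ1 : exp (-(u / 3)) ≤ 1 := exp_le_one_iff.mpr (by linarith)
  have hη : exp (-(u / 2)) ≤ exp (-(u / 3)) / 2 := by
    calc exp (-(u / 2)) = exp (-(u / 3)) * exp (-(u / 6)) := by rw [← exp_add]; ring_nf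
      _ ≤ exp (-(u / 3)) * exp (-1) := by gcongr; linarith
      _ ≤ exp (-(u / 3)) / 2 := by nlinarith [exp_neg_one_lt_half, exp_pos (-(u / 3))]
  linarith [exp_neg_le_one_sub_half (exp_pos (-(u / 3))).le hδ1]

lemma one_le_mul_log_two_sub_ten_mul_log {k : ℝ} (hk : 3600 ≤ k) :
    1 ≤ k * log 2 - 10 * log k := by
  have hsqrt : 60 ≤ √k := le_sqrt_of_sq_le (by linarith)
  have hk_eq : √k * √k = k := mul_self_sqrt (by linarith)
  have hlog : log k ≤ 2 * √k - 2 := by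
    have := log_le_sub_one_of_pos (show 0 < √k by linarith)
    rw [log_sqrt (by linarith)] at this
    linarith
  nlinarith [log_two_gt_d9]

/-- There is `k₀ ≥ 3` such that for `k ≥ k₀`, `β ≥ k ln 2 - 10 ln k` and `p ≥ 1`: if at least
`p` of the indices `j ∈ P` with `j ≠ x` satisfy `ν j ≥ 1 - exp (-kβ/2)`, then
`N_x(1) ≥ exp (-exp (-pkβ/3)) N_x(-1)`. -/
theorem stmt_5 :
    ∃ k₀ : ℕ, 3 ≤ k₀ ∧ ∀ k : ℕ, k₀ ≤ k → ∀ β : ℝ, 0 ≤ β →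
      (k : ℝ) * Real.log 2 - 10 * Real.log k ≤ β →
      ∀ p : ℕ, 1 ≤ p →
      ∀ (P : Finset (Fin k)) (x : Fin k) (ν : Fin k → ℝ),
        (∀ j, ν j ∈ Set.Icc (0 : ℝ) 1) →
        p ≤ ((P.erase x).filter fun j => 1 - Real.exp (-((k : ℝ) * β / 2)) ≤ ν j).card →
        Real.exp (-Real.exp (-((p : ℝ) * k * β / 3))) * Nmsg k β P ν x false ≤
          Nmsg k β P ν x true := by
  refine ⟨3600, by norm_num, fun k hk β hβ hβk p hp P x ν hν hcard => ?_⟩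
  have hk' : (3600 : ℝ) ≤ k := by exact_mod_cast hk
  have hβ1 : 1 ≤ β := (one_le_mul_log_two_sub_ten_mul_log hk').trans hβk
  have hu : 6 ≤ (p : ℝ) * k * β := by
    have hp' : (1 : ℝ) ≤ p := by exact_mod_cast hp
    calc (6 : ℝ) ≤ 1 * 3600 * 1 := by norm_num
      _ ≤ (p : ℝ) * k * β := by gcongr
  by_cases hxP : x ∈ P
  · rw [Nmsg_eq_one (Or.inl ⟨hxP, rfl⟩)]
    exact mul_le_one₀ (exp_le_one_iff.mpr (neg_nonpos.mpr (exp_pos _).le)) (Nmsg_nonneg hν _)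
      (Nmsg_le_one hβ hν _)
  · rw [Nmsg_eq_one (Or.inr ⟨hxP, rfl⟩), mul_one]
    have hW := msgWeight_violatingAssignment_le hν (exp_pos _).le
      (exp_le_one_iff.mpr (by nlinarith)) hcard
    calc exp (-exp (-((p : ℝ) * k * β / 3))) ≤ 1 - exp (-((p : ℝ) * k * β / 2)) :=
          exp_neg_exp_le_one_sub_exp hu
      _ = 1 - exp (-((k : ℝ) * β / 2)) ^ p := by rw [← exp_nat_mul]; ring_nf
      _ ≤ 1 - msgWeight ν x (violatingAssignment P) := by linarith
      _ ≤ Nmsg k β P ν x true := one_sub_msgWeight_violatingAssignment_le_Nmsg hν true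
end

section
/- Suppose (π, π̂) is a fixed point of (F, F̂), i.e. π = F(π̂) and π̂ = F̂(π). Then ∫_{(0,1)} η dπ(η) = 1 − ∫_{(0,1)} η̂ dπ̂(η̂), and ∫_{(0,1)} η̂ dπ̂(η̂) = (1 − c_β·h^{k−1})/(2 − c_β·h^{k−1}), where h = ∫_{(0,1)} η dπ(η). -/
open MeasureTheory

/-- `z(η̂) = ∏_{j=1}^{d/2-1} η̂_j ∏_{j=d/2}^{d-1} (1-η̂_j) + ∏_{j=1}^{d/2-1} (1-η̂_j) ∏_{j=d/2}^{d-1} η̂_j`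
(coordinates of `Fin (d-1)` are 0-indexed: the first `d/2 - 1` of them, then the last `d/2`). -/
noncomputable def zf (d : ℕ) (η : Fin (d - 1) → ℝ) : ℝ :=
  (∏ j : Fin (d - 1), if (j : ℕ) < d / 2 - 1 then η j else 1 - η j) +
    ∏ j : Fin (d - 1), if (j : ℕ) < d / 2 - 1 then 1 - η j else η j

/-- `f(η̂) = (∏_{j=1}^{d/2-1} η̂_j ∏_{j=d/2}^{d-1} (1-η̂_j)) / z(η̂)`. -/
noncomputable def ff (d : ℕ) (η : Fin (d - 1) → ℝ) : ℝ :=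
  (∏ j : Fin (d - 1), if (j : ℕ) < d / 2 - 1 then η j else 1 - η j) / zf d η

/-- `ẑ(η) = 2 - c_β ∏_{j=1}^{k-1} η_j`, with `c_β = 1 - exp (-β)`. -/
noncomputable def zh (k : ℕ) (β : ℝ) (η : Fin (k - 1) → ℝ) : ℝ :=
  2 - (1 - Real.exp (-β)) * ∏ j, η j

/-- `f̂(η) = (1 - c_β ∏_{j=1}^{k-1} η_j) / ẑ(η)`. -/
noncomputable def fh (k : ℕ) (β : ℝ) (η : Fin (k - 1) → ℝ) : ℝ :=
  (1 - (1 - Real.exp (-β)) * ∏ j, η j) / zh k β η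

/-- The operator `F`: the pushforward under `f` of the probability measure on `(0,1)^{d-1}`
with density `z / ∫ z dπh^{⊗(d-1)}` with respect to `πh^{⊗(d-1)}`. -/
noncomputable def Fop (d : ℕ) (πh : Measure ℝ) : Measure ℝ :=
  Measure.map (ff d)
    ((Measure.pi fun _ : Fin (d - 1) => πh).withDensity fun η =>
      ENNReal.ofReal (zf d η / ∫ η', zf d η' ∂(Measure.pi fun _ : Fin (d - 1) => πh)))

/-- The operator `F̂`: the pushforward under `f̂` of the probability measure on `(0,1)^{k-1}`
with density `ẑ / ∫ ẑ dπ^{⊗(k-1)}` with respect to `π^{⊗(k-1)}`. -/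
noncomputable def Fhat (k : ℕ) (β : ℝ) (π : Measure ℝ) : Measure ℝ :=
  Measure.map (fh k β)
    ((Measure.pi fun _ : Fin (k - 1) => π).withDensity fun η =>
      ENNReal.ofReal (zh k β η / ∫ η', zh k β η' ∂(Measure.pi fun _ : Fin (k - 1) => π)))


/-!
Both identities come from one computation: if `ν'` has density `z / ∫ z dν` with respect to `ν`
and `z > 0`, then the pushforward of `ν'` under `num / z` has mean `∫ num dν / ∫ z dν`, because the
density cancels the denominator. For the product measures, Fubini turns the integrals of the
products into powers of the mean `m` of the input measure. For even `d` the two terms of `∫ z`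
share the factor `(m (1 - m)) ^ (d / 2 - 1)`, which leaves `(1 - m) / ((1 - m) + m) = 1 - m`.
-/

open Set

section Tilting

variable {α : Type*} [MeasurableSpace α] {ν : Measure α}

lemma integral_pos_of_ae_pos [NeZero ν] {f : α → ℝ} (hf : Integrable f ν)
    (hpos : ∀ᵐ x ∂ν, 0 < f x) : 0 < ∫ x, f x ∂ν := by
  rw [integral_pos_iff_support_of_nonneg_ae (hpos.mono fun _ h => h.le) hf]
  calc 0 < ν univ := Measure.measure_univ_pos.2 (NeZero.ne ν)
    _ ≤ ν (Function.support f) := measure_mono_ae (hpos.mono fun _ hx _ => hx.ne')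

lemma integral_id_map_div_withDensity {z num : α → ℝ} (hz : AEMeasurable z ν)
    (hnum : AEMeasurable num ν) (hz_pos : ∀ᵐ a ∂ν, 0 < z a) :
    ∫ x, x ∂((ν.withDensity fun a => ENNReal.ofReal (z a / ∫ a', z a' ∂ν)).map
      fun a => num a / z a) = (∫ a, num a ∂ν) / ∫ a, z a ∂ν := by
  set Z := ∫ a, z a ∂ν
  have hZ : 0 ≤ Z := integral_nonneg_of_ae (hz_pos.mono fun _ h => h.le)
  have hdensity : AEMeasurable (fun a => ENNReal.ofReal (z a / Z)) ν :=
    (hz.div_const Z).ennreal_ofReal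
  rw [integral_map (φ := fun a => num a / z a) (f := fun x => x)
      ((hnum.div hz).mono' (withDensity_absolutelyContinuous _ _)) aestronglyMeasurable_id,
    integral_withDensity_eq_integral_toReal_smul₀ hdensity
      (ae_of_all _ fun _ => ENNReal.ofReal_lt_top), ← integral_div]
  refine integral_congr_ae (hz_pos.mono fun a ha => ?_)
  dsimp only
  rw [ENNReal.toReal_ofReal (div_nonneg ha.le hZ), smul_eq_mul, div_mul_div_comm, mul_comm Z,
    mul_div_mul_left _ _ ha.ne']

end Tilting

section UnitInterval

variable {μ : Measure ℝ} [IsProbabilityMeasure μ]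

lemma ae_mem_of_measure_eq_one {s : Set ℝ} (hs : MeasurableSet s) (hμ : μ s = 1) :
    ∀ᵐ x ∂μ, x ∈ s :=
  (ae_mem_iff_measure_eq hs.nullMeasurableSet).2 (by rw [hμ, measure_univ])

lemma integrable_id_of_ae_mem_Ioo (h : ∀ᵐ x ∂μ, x ∈ Ioo (0 : ℝ) 1) :
    Integrable (fun x => x) μ :=
  .of_bound aestronglyMeasurable_id 1 <| h.mono fun _ hx => by
    rw [Real.norm_eq_abs, abs_le]; constructor <;> linarith [hx.1, hx.2]

lemma integral_one_sub_id (h : ∀ᵐ x ∂μ, x ∈ Ioo (0 : ℝ) 1) :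
    ∫ x, (1 - x) ∂μ = 1 - ∫ x, x ∂μ := by
  rw [integral_sub (integrable_const 1) (integrable_id_of_ae_mem_Ioo h)]
  simp

lemma integral_id_mem_Ioo (h : ∀ᵐ x ∂μ, x ∈ Ioo (0 : ℝ) 1) : ∫ x, x ∂μ ∈ Ioo (0 : ℝ) 1 := by
  have hint := integrable_id_of_ae_mem_Ioo h
  refine ⟨integral_pos_of_ae_pos hint (h.mono fun _ hx => hx.1), ?_⟩
  have := integral_pos_of_ae_pos (f := fun x => 1 - x) ((integrable_const 1).sub hint)
    (h.mono fun _ hx => sub_pos.2 hx.2)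
  rw [integral_one_sub_id h] at this
  linarith

lemma ae_pi_forall_mem {ι : Type*} [Fintype ι] {s : Set ℝ} (h : ∀ᵐ x ∂μ, x ∈ s) :
    ∀ᵐ η ∂(Measure.pi fun _ : ι => μ), ∀ j, η j ∈ s :=
  ae_all_iff.2 fun _ => Measure.tendsto_eval_ae_ae.eventually h

end UnitInterval

lemma prod_ite_val_lt {M : Type*} [CommMonoid M] {n a : ℕ} (ha : a ≤ n) (x y : M) :
    ∏ j : Fin n, (if (j : ℕ) < a then x else y) = x ^ a * y ^ (n - a) := by
  rw [Finset.prod_ite, Finset.prod_const, Finset.prod_const, Fin.card_filter_val_lt,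
    Finset.filter_not, Finset.card_sdiff]
  simp [Fin.card_filter_val_lt, ha]

lemma integral_pi_prod_ite_val_lt {μ : Measure ℝ} [SigmaFinite μ] {n a : ℕ} (ha : a ≤ n)
    (u v : ℝ → ℝ) :
    ∫ η, ∏ j : Fin n, (if (j : ℕ) < a then u (η j) else v (η j)) ∂(Measure.pi fun _ => μ) =
      (∫ x, u x ∂μ) ^ a * (∫ x, v x ∂μ) ^ (n - a) := by
  rw [integral_fintype_prod_eq_prod (fun (j : Fin n) x => if (j : ℕ) < a then u x else v x),
    ← prod_ite_val_lt ha]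
  exact Finset.prod_congr rfl fun j _ => by split_ifs <;> rfl

section FixedPoint

variable {μ : Measure ℝ} [IsProbabilityMeasure μ]

lemma integral_id_Fop (d : ℕ) (hμ : μ (Ioo 0 1) = 1) :
    ∫ x, x ∂(Fop d μ) =
      (∫ x, x ∂μ) ^ (d / 2 - 1) * (1 - ∫ x, x ∂μ) ^ (d - 1 - (d / 2 - 1)) /
        ((∫ x, x ∂μ) ^ (d / 2 - 1) * (1 - ∫ x, x ∂μ) ^ (d - 1 - (d / 2 - 1)) +
          (1 - ∫ x, x ∂μ) ^ (d / 2 - 1) * (∫ x, x ∂μ) ^ (d - 1 - (d / 2 - 1))) := by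
  have hae := ae_mem_of_measure_eq_one measurableSet_Ioo hμ
  have hint := integrable_id_of_ae_mem_Ioo hae
  have hint' : Integrable (fun x => 1 - x) μ := (integrable_const 1).sub hint
  have ha : d / 2 - 1 ≤ d - 1 := by omega
  have hP₁ := integral_pi_prod_ite_val_lt (μ := μ) ha (fun x => x) (fun x => 1 - x)
  have hP₂ := integral_pi_prod_ite_val_lt (μ := μ) ha (fun x => 1 - x) (fun x => x)
  simp only [integral_one_sub_id hae] at hP₁ hP₂
  have hP₁_int : Integrable (fun η : Fin (d - 1) → ℝ =>
      ∏ j : Fin (d - 1), if (j : ℕ) < d / 2 - 1 then η j else 1 - η j) (Measure.pi fun _ => μ) :=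
    Integrable.fintype_prod
      (f := fun (j : Fin (d - 1)) x => if (j : ℕ) < d / 2 - 1 then x else 1 - x)
      fun _ => by split_ifs; exacts [hint, hint']
  have hP₂_int : Integrable (fun η : Fin (d - 1) → ℝ =>
      ∏ j : Fin (d - 1), if (j : ℕ) < d / 2 - 1 then 1 - η j else η j) (Measure.pi fun _ => μ) :=
    Integrable.fintype_prod
      (f := fun (j : Fin (d - 1)) x => if (j : ℕ) < d / 2 - 1 then 1 - x else x)
      fun _ => by split_ifs; exacts [hint', hint]
  have hz_pos : ∀ᵐ η ∂(Measure.pi fun _ : Fin (d - 1) => μ), 0 < zf d η :=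
    (ae_pi_forall_mem hae).mono fun η h => add_pos
      (Finset.prod_pos fun j _ => by split_ifs <;> linarith [(h j).1, (h j).2])
      (Finset.prod_pos fun j _ => by split_ifs <;> linarith [(h j).1, (h j).2])
  have hz : ∫ η, zf d η ∂(Measure.pi fun _ : Fin (d - 1) => μ) = _ :=
    integral_add hP₁_int hP₂_int
  refine (integral_id_map_div_withDensity (z := zf d) (hP₁_int.add hP₂_int).aemeasurable
    hP₁_int.aemeasurable hz_pos).trans ?_
  rw [hz, hP₁, hP₂]

lemma integral_id_Fop_of_even {d : ℕ} (hd : 2 ≤ d) (hde : Even d) (hμ : μ (Ioo 0 1) = 1) :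
    ∫ x, x ∂(Fop d μ) = 1 - ∫ x, x ∂μ := by
  obtain ⟨hm₀, hm₁⟩ := integral_id_mem_Ioo (ae_mem_of_measure_eq_one measurableSet_Ioo hμ)
  have hcompl : d - 1 - (d / 2 - 1) = d / 2 - 1 + 1 := by obtain ⟨r, rfl⟩ := hde; omega
  rw [integral_id_Fop d hμ, hcompl]
  have h1m : 0 < 1 - ∫ x, x ∂μ := sub_pos.2 hm₁
  have hcommon : 0 < (∫ x, x ∂μ) ^ (d / 2 - 1) * (1 - ∫ x, x ∂μ) ^ (d / 2 - 1) := by positivity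
  field_simp
  ring

lemma integral_id_Fhat (k : ℕ) (β : ℝ) (hμ : μ (Ioo 0 1) = 1) :
    ∫ x, x ∂(Fhat k β μ) =
      (1 - (1 - Real.exp (-β)) * (∫ x, x ∂μ) ^ (k - 1)) /
        (2 - (1 - Real.exp (-β)) * (∫ x, x ∂μ) ^ (k - 1)) := by
  set c := 1 - Real.exp (-β)
  have hc : c < 1 := by linarith [Real.exp_pos (-β)]
  have hae := ae_mem_of_measure_eq_one measurableSet_Ioo hμ
  have hprod_int : Integrable (fun η : Fin (k - 1) → ℝ => ∏ j, η j) (Measure.pi fun _ => μ) :=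
    Integrable.fintype_prod fun _ => integrable_id_of_ae_mem_Ioo hae
  have hprod : ∫ η, ∏ j, η j ∂(Measure.pi fun _ : Fin (k - 1) => μ) = (∫ x, x ∂μ) ^ (k - 1) := by
    rw [integral_fintype_prod_eq_pow (fun x => x), Fintype.card_fin]
  have hz_pos : ∀ᵐ η ∂(Measure.pi fun _ : Fin (k - 1) => μ), 0 < zh k β η :=
    (ae_pi_forall_mem hae).mono fun η h => by
      have h₀ : 0 < ∏ j, η j := Finset.prod_pos fun j _ => (h j).1
      have h₁ : ∏ j, η j ≤ 1 := Finset.prod_le_one (fun j _ => (h j).1.le) fun j _ => (h j).2.le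
      show 0 < 2 - c * ∏ j, η j
      nlinarith
  refine (integral_id_map_div_withDensity (num := fun η => 1 - c * ∏ j, η j)
    (by unfold zh; fun_prop) (by fun_prop) hz_pos).trans ?_
  unfold zh
  rw [integral_sub (integrable_const _) (hprod_int.const_mul c),
    integral_sub (integrable_const _) (hprod_int.const_mul c), integral_const_mul, hprod]
  simp

end FixedPoint

theorem stmt_6_general (k d : ℕ) (hd : 2 ≤ d) (hde : Even d) (β : ℝ)
    (π πh : Measure ℝ) [IsProbabilityMeasure π] [IsProbabilityMeasure πh]
    (hπ : π (Set.Ioo 0 1) = 1) (hπh : πh (Set.Ioo 0 1) = 1)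
    (hfix₁ : π = Fop d πh) (hfix₂ : πh = Fhat k β π) :
    (∫ x, x ∂π) = 1 - ∫ x, x ∂πh ∧
      (∫ x, x ∂πh) =
        (1 - (1 - Real.exp (-β)) * (∫ x, x ∂π) ^ (k - 1)) /
          (2 - (1 - Real.exp (-β)) * (∫ x, x ∂π) ^ (k - 1)) := by
  constructor
  · rw [hfix₁]
    exact integral_id_Fop_of_even hd hde hπh
  · rw [hfix₂]
    exact integral_id_Fhat k β hπ

/-- If `(π, πh)` is a fixed point of `(F, F̂)` then `∫ η dπ = 1 - ∫ η̂ dπh` and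
`∫ η̂ dπh = (1 - c_β h^{k-1})/(2 - c_β h^{k-1})` where `h = ∫ η dπ`. -/
theorem stmt_6 (k d : ℕ) (hk : 2 ≤ k) (hd : 2 ≤ d) (hde : Even d) (β : ℝ) (hβ : 0 < β)
    (π πh : Measure ℝ) [IsProbabilityMeasure π] [IsProbabilityMeasure πh]
    (hπ : π (Set.Ioo 0 1) = 1) (hπh : πh (Set.Ioo 0 1) = 1)
    (hfix₁ : π = Fop d πh) (hfix₂ : πh = Fhat k β π) :
    (∫ x, x ∂π) = 1 - ∫ x, x ∂πh ∧
      (∫ x, x ∂πh) =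
        (1 - (1 - Real.exp (-β)) * (∫ x, x ∂π) ^ (k - 1)) /
          (2 - (1 - Real.exp (-β)) * (∫ x, x ∂π) ^ (k - 1)) :=
  stmt_6_general k d hd hde β π πh hπ hπh hfix₁ hfix₂
end

section
/- Let q ∈ (0,1), let L ≥ 1 be an integer, and let μ, ν : {−1,1}^L → [0,∞) be probability mass functions. Assume that for every i ∈ {1,…,L} and every y ∈ {−1,1}^L one has (1−q)·μ(y^{i,−}) ≤ q·μ(y^{i,+}) and (1−q)·ν(y^{i,−}) = q·ν(y^{i,+}), where y^{i,±} denotes y with its i-th coordinate replaced by ±1. Let B ⊆ {−1,1}^L be upward closed, i.e. if b ∈ B and b' ≥ b coordinatewise then b' ∈ B. Then Σ_{y ∈ B} μ(y) ≥ Σ_{y ∈ B} ν(y). -/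
open Finset Function

private lemma sum_cons_decomp {L : ℕ} (f : (Fin (L + 1) → Bool) → ℝ) :
    ∑ y, f y = ∑ x, f (Fin.cons false x) + ∑ x, f (Fin.cons true x) := by
  rw [← Equiv.sum_comp (Fin.consEquiv (fun _ : Fin (L + 1) => Bool)) f,
    Fintype.sum_prod_type, Fintype.sum_bool]
  simp [Fin.consEquiv, add_comm]

private lemma key (q : ℝ) (hq0 : 0 < q) (hq1 : q < 1) :
    ∀ (L : ℕ) (μ ν : (Fin L → Bool) → ℝ),
      (∀ y, 0 ≤ μ y) → (∀ y, 0 ≤ ν y) → (∑ y, μ y = ∑ y, ν y) →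
      (∀ (i : Fin L) (y : Fin L → Bool),
        (1 - q) * μ (update y i false) ≤ q * μ (update y i true)) →
      (∀ (i : Fin L) (y : Fin L → Bool),
        (1 - q) * ν (update y i false) = q * ν (update y i true)) →
      ∀ B : Finset (Fin L → Bool), (∀ b ∈ B, ∀ b', b ≤ b' → b' ∈ B) →
      ∑ y ∈ B, ν y ≤ ∑ y ∈ B, μ y := by
  intro L
  induction L with
  | zero =>
    intro μ ν hμ0 hν0 hsum hμ hν B hB
    rcases B.eq_empty_or_nonempty with h | ⟨b, hb⟩
    · simp [h]
    · have hBu : B = Finset.univ :=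
        Finset.eq_univ_of_forall fun y => by rwa [Subsingleton.elim y b]
      rw [hBu]
      exact hsum.ge
  | succ L ih =>
    intro μ ν hμ0 hν0 hsum hμ hν B hB
    set S := ∑ y, ν y with hSdef
    -- slices
    set μt : (Fin L → Bool) → ℝ := fun x => μ (Fin.cons true x) with hμtdef
    set μf : (Fin L → Bool) → ℝ := fun x => μ (Fin.cons false x) with hμfdef
    set νt : (Fin L → Bool) → ℝ := fun x => ν (Fin.cons true x) with hνtdef
    set νf : (Fin L → Bool) → ℝ := fun x => ν (Fin.cons false x) with hνfdef
    have hμt_cond : ∀ (i : Fin L) (x : Fin L → Bool),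
        (1 - q) * μt (update x i false) ≤ q * μt (update x i true) := by
      intro i x
      simpa [hμtdef, ← Fin.cons_update] using hμ i.succ (Fin.cons true x)
    have hνt_cond : ∀ (i : Fin L) (x : Fin L → Bool),
        (1 - q) * νt (update x i false) = q * νt (update x i true) := by
      intro i x
      simpa [hνtdef, ← Fin.cons_update] using hν i.succ (Fin.cons true x)
    have hμf_cond : ∀ (i : Fin L) (x : Fin L → Bool),
        (1 - q) * μf (update x i false) ≤ q * μf (update x i true) := by
      intro i x
      simpa [hμfdef, ← Fin.cons_update] using hμ i.succ (Fin.cons false x)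
    have hνf_cond : ∀ (i : Fin L) (x : Fin L → Bool),
        (1 - q) * νf (update x i false) = q * νf (update x i true) := by
      intro i x
      simpa [hνfdef, ← Fin.cons_update] using hν i.succ (Fin.cons false x)
    have hcrossμ : ∀ x, (1 - q) * μf x ≤ q * μt x := by
      intro x
      simpa [hμtdef, hμfdef, Fin.update_cons_zero] using hμ 0 (Fin.cons true x)
    have hcrossν : ∀ x, (1 - q) * νf x = q * νt x := by
      intro x
      simpa [hνtdef, hνfdef, Fin.update_cons_zero] using hν 0 (Fin.cons true x)
    set mt := ∑ x, μt x with hmtdef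
    set mf := ∑ x, μf x with hmfdef
    set nt := ∑ x, νt x with hntdef
    set nf := ∑ x, νf x with hnfdef
    have hμsplit : mf + mt = S := by
      rw [hmtdef, hmfdef, ← sum_cons_decomp μ, hsum]
    have hνsplit : nf + nt = S := by
      rw [hntdef, hnfdef, ← sum_cons_decomp ν]
    have hncross : (1 - q) * nf = q * nt := by
      rw [hntdef, hnfdef, Finset.mul_sum, Finset.mul_sum]
      exact Finset.sum_congr rfl fun x _ => hcrossν x
    have hmcross : (1 - q) * mf ≤ q * mt := by
      rw [hmtdef, hmfdef, Finset.mul_sum, Finset.mul_sum]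
      exact Finset.sum_le_sum fun x _ => hcrossμ x
    have hnt : nt = (1 - q) * S := by linear_combination (1 - q) * hνsplit - hncross
    have hnf : nf = q * S := by linear_combination q * hνsplit + hncross
    have hS0 : 0 ≤ S := Finset.sum_nonneg fun y _ => hν0 y
    -- B slices
    classical
    set Bt : Finset (Fin L → Bool) := Finset.univ.filter (fun x => Fin.cons true x ∈ B) with hBtdef
    set Bf : Finset (Fin L → Bool) := Finset.univ.filter (fun x => Fin.cons false x ∈ B) with hBfdef
    have hsumB : ∀ f : (Fin (L + 1) → Bool) → ℝ,
        ∑ y ∈ B, f y = ∑ x ∈ Bf, f (Fin.cons false x) + ∑ x ∈ Bt, f (Fin.cons true x) := by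
      intro f
      have h1 : ∑ y ∈ B, f y = ∑ y, if y ∈ B then f y else 0 := by
        rw [Finset.sum_ite_mem, Finset.univ_inter]
      rw [h1, sum_cons_decomp (fun y => if y ∈ B then f y else 0), hBtdef, hBfdef,
        Finset.sum_filter, Finset.sum_filter]
    have hconsle : ∀ (b : Bool) (x x' : Fin L → Bool), x ≤ x' →
        (Fin.cons b x : Fin (L + 1) → Bool) ≤ Fin.cons b x' := by
      intro b x x' hle j
      induction j using Fin.cases with
      | zero => simp
      | succ i => simpa using hle i
    have hBt_up : ∀ b ∈ Bt, ∀ b', b ≤ b' → b' ∈ Bt := by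
      intro x hx x' hle
      rw [hBtdef, Finset.mem_filter] at hx ⊢
      exact ⟨Finset.mem_univ _, hB _ hx.2 _ (hconsle true x x' hle)⟩
    have hBf_up : ∀ b ∈ Bf, ∀ b', b ≤ b' → b' ∈ Bf := by
      intro x hx x' hle
      rw [hBfdef, Finset.mem_filter] at hx ⊢
      exact ⟨Finset.mem_univ _, hB _ hx.2 _ (hconsle false x x' hle)⟩
    have hBfsub : Bf ⊆ Bt := by
      intro x hx
      rw [hBfdef, Finset.mem_filter] at hx
      rw [hBtdef, Finset.mem_filter]
      refine ⟨Finset.mem_univ _, hB _ hx.2 _ ?_⟩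
      intro j
      induction j using Fin.cases with
      | zero => simp
      | succ i => simp
    rcases eq_or_lt_of_le hS0 with hSz | hSpos
    · -- S = 0 : everything vanishes
      have hνz : ∀ y, ν y = 0 := by
        have := (Finset.sum_eq_zero_iff_of_nonneg (fun y _ => hν0 y)).mp hSz.symm
        exact fun y => this y (Finset.mem_univ y)
      have hμz : ∀ y, μ y = 0 := by
        have : ∑ y, μ y = 0 := by rw [hsum]; exact hSz.symm
        have := (Finset.sum_eq_zero_iff_of_nonneg (fun y _ => hμ0 y)).mp this
        exact fun y => this y (Finset.mem_univ y)
      rw [Finset.sum_eq_zero (fun y _ => hνz y), Finset.sum_eq_zero (fun y _ => hμz y)]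
    · -- S > 0
      have hq1' : 0 < 1 - q := by linarith
      have hposT : 0 < (1 - q) * S := mul_pos hq1' hSpos
      have hposF : 0 < q * S := mul_pos hq0 hSpos
      have hmt0 : 0 ≤ mt := Finset.sum_nonneg fun x _ => hμ0 _
      have hmf0 : 0 ≤ mf := Finset.sum_nonneg fun x _ => hμ0 _
      -- apply IH on the true slice
      have hIHt : ∑ x ∈ Bt, (mt / ((1 - q) * S)) * νt x ≤ ∑ x ∈ Bt, μt x := by
        refine ih μt (fun x => (mt / ((1 - q) * S)) * νt x) (fun x => hμ0 _)
          (fun x => mul_nonneg (div_nonneg hmt0 hposT.le) (hν0 _)) ?_ hμt_cond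
          (fun i x => by linear_combination (mt / ((1 - q) * S)) * hνt_cond i x) Bt hBt_up
        rw [← Finset.mul_sum, ← hntdef, hnt, div_mul_cancel₀ _ hposT.ne']
      have hIHf : ∑ x ∈ Bf, (mf / (q * S)) * νf x ≤ ∑ x ∈ Bf, μf x := by
        refine ih μf (fun x => (mf / (q * S)) * νf x) (fun x => hμ0 _)
          (fun x => mul_nonneg (div_nonneg hmf0 hposF.le) (hν0 _)) ?_ hμf_cond
          (fun i x => by linear_combination (mf / (q * S)) * hνf_cond i x) Bf hBf_up
        rw [← Finset.mul_sum, ← hnfdef, hnf, div_mul_cancel₀ _ hposF.ne']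
      rw [← Finset.mul_sum] at hIHt hIHf
      set a := ∑ x ∈ Bt, νt x with hadef
      set b := ∑ x ∈ Bf, νf x with hbdef
      set A := ∑ x ∈ Bt, μt x with hAdef
      set C := ∑ x ∈ Bf, μf x with hCdef
      set a' := ∑ x ∈ Bf, νt x with ha'def
      have ha'le : a' ≤ a :=
        Finset.sum_le_sum_of_subset_of_nonneg hBfsub (fun x _ _ => hν0 _)
      have hba' : (1 - q) * b = q * a' := by
        rw [hbdef, ha'def, Finset.mul_sum, Finset.mul_sum]
        exact Finset.sum_congr rfl fun x _ => hcrossν x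
      have ha0 : 0 ≤ a := Finset.sum_nonneg fun x _ => hν0 _
      have hb0 : 0 ≤ b := Finset.sum_nonneg fun x _ => hν0 _
      have ha'0 : 0 ≤ a' := Finset.sum_nonneg fun x _ => hν0 _
      -- clear divisions
      have h1 : mt * a ≤ (1 - q) * S * A := by
        rw [div_mul_eq_mul_div, div_le_iff₀ hposT] at hIHt
        linarith [hIHt]
      have h2 : mf * b ≤ q * S * C := by
        rw [div_mul_eq_mul_div, div_le_iff₀ hposF] at hIHf
        linarith [hIHf]
      have h5 : q * (mf + mt) = q * S := by rw [hμsplit]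
      have ht : (1 - q) * S ≤ mt := by linarith only [hmcross, hμsplit, h5]
      have h4 : 0 ≤ q * a - (1 - q) * b := by
        linarith only [hba', mul_nonneg hq0.le (sub_nonneg.mpr ha'le)]
      have h3 : 0 ≤ (mt - (1 - q) * S) * (q * a - (1 - q) * b) :=
        mul_nonneg (by linarith) h4
      have hmf' : mf = S - mt := by linarith
      rw [hmf'] at h2
      have goal' : b + a ≤ C + A := by
        have hkey : 0 ≤ q * (1 - q) * S * ((C + A) - (a + b)) := by
          have e : q * (1 - q) * S * ((C + A) - (a + b)) =
              q * ((1 - q) * S * A - mt * a) + (1 - q) * (q * S * C - (S - mt) * b)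
              + (mt - (1 - q) * S) * (q * a - (1 - q) * b) := by ring
          rw [e]
          exact add_nonneg (add_nonneg (mul_nonneg hq0.le (sub_nonneg.mpr h1))
            (mul_nonneg hq1'.le (sub_nonneg.mpr h2))) h3
        have hpos : 0 < q * (1 - q) * S := mul_pos (mul_pos hq0 hq1') hSpos
        have := (mul_nonneg_iff_of_pos_left hpos).mp hkey
        linarith only [this]
      rw [hsumB ν, hsumB μ]
      exact goal'

/-- Stochastic domination: if `μ` is a probability mass function on `{-1,1}^L` (encoded as
`Fin L → Bool`, `true ↔ 1`) satisfying `(1-q) μ(y^{i,-}) ≤ q μ(y^{i,+})` for all `i, y`, and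
`ν` is one satisfying `(1-q) ν(y^{i,-}) = q ν(y^{i,+})`, then for every upward closed set `B`
one has `μ(B) ≥ ν(B)`. -/
theorem stmt_9 (q : ℝ) (hq : q ∈ Set.Ioo (0 : ℝ) 1) (L : ℕ) (hL : 1 ≤ L)
    (μ ν : (Fin L → Bool) → ℝ)
    (hμ0 : ∀ y, 0 ≤ μ y) (hν0 : ∀ y, 0 ≤ ν y)
    (hμ1 : ∑ y, μ y = 1) (hν1 : ∑ y, ν y = 1)
    (hμ : ∀ (i : Fin L) (y : Fin L → Bool),
      (1 - q) * μ (Function.update y i false) ≤ q * μ (Function.update y i true))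
    (hν : ∀ (i : Fin L) (y : Fin L → Bool),
      (1 - q) * ν (Function.update y i false) = q * ν (Function.update y i true))
    (B : Finset (Fin L → Bool)) (hB : ∀ b ∈ B, ∀ b', b ≤ b' → b' ∈ B) :
    ∑ y ∈ B, ν y ≤ ∑ y ∈ B, μ y :=
  key q hq.1 hq.2 L μ ν hμ0 hν0 (by rw [hμ1, hν1]) hμ hν B hB
end

section
/- Let l ≥ 2 be an integer and let p_1,…,p_l ∈ (0,1) with Σ_{j=1}^l p_j = 1 and q_1,…,q_l ∈ (0,1) with Σ_{j=1}^l q_j = 1. For each integer n ≥ 1 let P_n = Σ over tuples (m_1,…,m_l) of nonnegative integers with m_1 + ⋯ + m_l = n and |m_j − n·q_j| ≤ 0.01·√n for every j, of (n!/(m_1!⋯m_l!))·∏_{j=1}^l p_j^{m_j}. Then (1/n)·ln P_n converges to Σ_{j=1}^l q_j·ln(p_j/q_j) as n → ∞. -/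
/-!
By Stirling's bounds on `log k!`, every term of `P_n` with frequency vector `m` satisfies
`log term = -n D(m/n ‖ p) + O(log n)`. The window has at most `(n + 1)^l` points and, for large `n`,
contains a rounding of `n q`, so `log P_n` is within `O(log n)` of the log of its largest term.
The frequencies `m/n` of that term tend to `q`, and `x ↦ -D(x ‖ p)` is continuous.
-/

open Classical in
/-- `P_n`: the probability that a multinomial random vector with parameters `(n; p)` has every
component within `0.01 √n` of `n q_j`, written out as a finite sum of multinomial
probabilities. -/
noncomputable def Pmult (l : ℕ) (p q : Fin l → ℝ) (n : ℕ) : ℝ :=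
  ∑ m ∈ Fintype.piFinset fun _ : Fin l => Finset.range (n + 1),
    if (∑ j, m j) = n ∧ ∀ j, |(m j : ℝ) - n * q j| ≤ 0.01 * Real.sqrt n then
      ((n.factorial : ℝ) / ∏ j, ((m j).factorial : ℝ)) * ∏ j, p j ^ m j
    else 0

open Real Filter Finset
open scoped Nat Topology

lemma mul_log_sub_le_log_factorial (n : ℕ) : n * log n - n ≤ log n ! := by
  rcases eq_or_ne n 0 with rfl | hn
  · simp
  have := Stirling.le_log_factorial_stirling hn
  have : 0 ≤ log (2 * π) := log_nonneg (by linarith [pi_gt_three])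
  linarith [log_natCast_nonneg n]

lemma log_factorial_le (n : ℕ) : log n ! ≤ n * log n - n + (1 + log n) := by
  rcases n with _ | k
  · simp
  have hmono : log (Stirling.stirlingSeq (k + 1)) ≤ log (Stirling.stirlingSeq 1) :=
    Stirling.log_stirlingSeq'_antitone (Nat.zero_le k)
  have hn : (0 : ℝ) < (k + 1 : ℕ) := by positivity
  rw [Stirling.log_stirlingSeq_formula, Stirling.stirlingSeq_one,
    log_div (exp_pos 1).ne' (by positivity), log_exp, log_sqrt zero_le_two,
    log_mul two_ne_zero hn.ne', log_div hn.ne' (exp_pos 1).ne', log_exp] at hmono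
  linarith [log_natCast_nonneg (k + 1)]

lemma natCast_mul_negMulLog_div {k n : ℕ} (hk : k ≤ n) :
    n * negMulLog (k / n) = k * log n - k * log k := by
  rcases Nat.eq_zero_or_pos k with rfl | hk0
  · simp
  have hn : (n : ℝ) ≠ 0 := Nat.cast_ne_zero.2 (by omega)
  rw [negMulLog, log_div (by positivity) hn]
  field_simp
  ring

lemma exists_sum_eq_abs_sub_le {ι : Type*} [Fintype ι] [DecidableEq ι] (q : ι → ℝ)
    (hq : ∀ i, 0 ≤ q i) (hqs : ∑ i, q i = 1) (n : ℕ) :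
    ∃ m : ι → ℕ, ∑ i, m i = n ∧ ∀ i, |(m i : ℝ) - n * q i| ≤ Fintype.card ι := by
  obtain ⟨i₀, -, -⟩ := exists_ne_zero_of_sum_ne_zero (hqs ▸ one_ne_zero : ∑ i, q i ≠ 0)
  have hcard : (1 : ℝ) ≤ Fintype.card ι := by exact_mod_cast Fintype.card_pos_iff.2 ⟨i₀⟩
  have hfloor : ∀ i, (⌊n * q i⌋₊ : ℝ) ≤ n * q i ∧ n * q i < ⌊n * q i⌋₊ + 1 := fun i =>
    ⟨Nat.floor_le (by have := hq i; positivity), Nat.lt_floor_add_one _⟩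
  have hle : ∑ i, ⌊n * q i⌋₊ ≤ n := by
    have : ∑ i, (⌊n * q i⌋₊ : ℝ) ≤ n := by
      calc ∑ i, (⌊n * q i⌋₊ : ℝ) ≤ ∑ i, n * q i := sum_le_sum fun i _ => (hfloor i).1
        _ = n := by rw [← mul_sum, hqs, mul_one]
    exact_mod_cast this
  set r := n - ∑ i, ⌊n * q i⌋₊
  have hr : (r : ℝ) = ∑ i, (n * q i - ⌊n * q i⌋₊) := by
    rw [Nat.cast_sub hle, sum_sub_distrib, ← mul_sum, hqs, mul_one]
    push_cast
    rfl
  have hr0 : (0 : ℝ) ≤ r := r.cast_nonneg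
  have hrc : (r : ℝ) ≤ Fintype.card ι := by
    calc (r : ℝ) = ∑ i, (n * q i - ⌊n * q i⌋₊) := hr
      _ ≤ ∑ _i : ι, (1 : ℝ) := sum_le_sum fun i _ => by linarith [hfloor i]
      _ = Fintype.card ι := by simp
  refine ⟨fun i => ⌊n * q i⌋₊ + (Pi.single i₀ r : ι → ℕ) i, ?_, fun i => ?_⟩
  · rw [sum_add_distrib, sum_pi_single', if_pos (mem_univ _)]
    omega
  · rcases eq_or_ne i i₀ with rfl | hi
    · simp only [Pi.single_eq_same, Nat.cast_add]
      rw [abs_le]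
      constructor <;> linarith [hfloor i]
    · simp only [Pi.single_eq_of_ne hi, add_zero]
      rw [abs_le]
      constructor <;> linarith [hfloor i]

lemma abs_log_multinomial_sub_le {ι : Type*} [Fintype ι] (m : ι → ℕ) {n : ℕ}
    (hm : ∑ i, m i = n) :
    |log ((n ! : ℝ) / ∏ i, ((m i)! : ℝ)) - n * ∑ i, negMulLog (m i / n)|
      ≤ (Fintype.card ι + 1) * (1 + log n) := by
  have hmn : ∀ i, m i ≤ n := fun i =>
    hm ▸ single_le_sum (fun _ _ => Nat.zero_le _) (mem_univ i)
  set E : ℕ → ℝ := fun k => log k ! - (k * log k - k) with hE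
  have hEbound : ∀ k ≤ n, 0 ≤ E k ∧ E k ≤ 1 + log n := fun k hk => by
    have : log k ≤ log n := by
      rcases Nat.eq_zero_or_pos k with rfl | hk0
      · simpa using log_natCast_nonneg n
      · exact log_le_log (by positivity) (by exact_mod_cast hk)
    constructor <;> linarith [mul_log_sub_le_log_factorial k, log_factorial_le k]
  have hmR : ∑ i, (m i : ℝ) = n := by exact_mod_cast hm
  have key : log ((n ! : ℝ) / ∏ i, ((m i)! : ℝ)) - n * ∑ i, negMulLog (m i / n)
      = E n - ∑ i, E (m i) := by
    rw [log_div (by positivity) (by positivity), log_prod fun i _ => by positivity, mul_sum]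
    simp only [natCast_mul_negMulLog_div (hmn _), hE, sum_sub_distrib, ← sum_mul, hmR]
    ring
  have hsum0 : 0 ≤ ∑ i, E (m i) := sum_nonneg fun i _ => (hEbound _ (hmn i)).1
  have hsum1 : ∑ i, E (m i) ≤ Fintype.card ι * (1 + log n) := by
    calc ∑ i, E (m i) ≤ ∑ _i : ι, (1 + log n) :=
          sum_le_sum fun i _ => (hEbound _ (hmn i)).2
      _ = Fintype.card ι * (1 + log n) := by rw [sum_const, card_univ, nsmul_eq_mul]
  have := hEbound n le_rfl
  rw [key, abs_le]
  constructor <;> nlinarith [log_natCast_nonneg n]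

lemma Finset.exists_le_sum_le_card_mul {α : Type*} {s : Finset α} (hs : s.Nonempty)
    {f : α → ℝ} (hf : ∀ i ∈ s, 0 ≤ f i) :
    ∃ i ∈ s, f i ≤ ∑ j ∈ s, f j ∧ ∑ j ∈ s, f j ≤ #s * f i := by
  obtain ⟨i, hi, hmax⟩ := s.exists_max_image f hs
  exact ⟨i, hi, single_le_sum hf hi, by simpa using sum_le_card_nsmul s f (f i) hmax⟩

section Multinomial

variable {ι : Type*} [Fintype ι] {p : ι → ℝ}

noncomputable def multinomialTerm (p : ι → ℝ) (n : ℕ) (m : ι → ℕ) : ℝ :=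
  ((n ! : ℝ) / ∏ i, ((m i)! : ℝ)) * ∏ i, p i ^ m i

/-- `-D(x ‖ p)`, written with `negMulLog` so that it is continuous in `x` up to the boundary. -/
noncomputable def negRelEntropy (p x : ι → ℝ) : ℝ := ∑ i, (x i * log (p i) + negMulLog (x i))

lemma continuous_negRelEntropy (p : ι → ℝ) : Continuous (negRelEntropy p) := by
  unfold negRelEntropy
  fun_prop

lemma negRelEntropy_eq_sum_mul_log_div (hp : ∀ i, 0 < p i) {x : ι → ℝ} (hx : ∀ i, 0 < x i) :
    negRelEntropy p x = ∑ i, x i * log (p i / x i) := by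
  refine sum_congr rfl fun i _ => ?_
  rw [negMulLog, log_div (hp i).ne' (hx i).ne']
  ring

lemma multinomialTerm_pos (hp : ∀ i, 0 < p i) (n : ℕ) (m : ι → ℕ) :
    0 < multinomialTerm p n m := by
  have := prod_pos fun i (_ : i ∈ univ) => pow_pos (hp i) (m i)
  unfold multinomialTerm
  positivity

lemma abs_log_multinomialTerm_sub_le (hp : ∀ i, 0 < p i) {m : ι → ℕ} {n : ℕ}
    (hm : ∑ i, m i = n) :
    |log (multinomialTerm p n m) - n * negRelEntropy p (fun i => m i / n)|
      ≤ (Fintype.card ι + 1) * (1 + log n) := by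
  have hcancel : ∀ i, (n : ℝ) * (m i / n) = m i := fun i => by
    rcases Nat.eq_zero_or_pos n with rfl | hn
    · simp [(sum_eq_zero_iff.1 hm) i (mem_univ i)]
    · field_simp
  have hsplit : log (multinomialTerm p n m) - n * negRelEntropy p (fun i => m i / n)
      = log ((n ! : ℝ) / ∏ i, ((m i)! : ℝ)) - n * ∑ i, negMulLog (m i / n) := by
    have := prod_pos fun i (_ : i ∈ univ) => pow_pos (hp i) (m i)
    have hterms : ∑ i, (n : ℝ) * (m i / n * log (p i) + negMulLog (m i / n))
        = ∑ i, log (p i ^ m i) + ∑ i, n * negMulLog (m i / n) := by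
      rw [← sum_add_distrib]
      refine sum_congr rfl fun i _ => ?_
      rw [log_pow, mul_add, ← mul_assoc, hcancel]
    rw [multinomialTerm, negRelEntropy, log_mul (by positivity) this.ne',
      log_prod fun i _ => (pow_pos (hp i) (m i)).ne', mul_sum, mul_sum, hterms]
    ring
  rw [hsplit]
  exact abs_log_multinomial_sub_le m hm

end Multinomial

open Classical in
noncomputable def window (l : ℕ) (q : Fin l → ℝ) (n : ℕ) : Finset (Fin l → ℕ) :=
  {m ∈ Fintype.piFinset fun _ : Fin l => range (n + 1) |
    (∑ j, m j) = n ∧ ∀ j, |(m j : ℝ) - n * q j| ≤ 0.01 * √n}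

section Window

variable {l : ℕ} {p q : Fin l → ℝ} {n : ℕ}

lemma Pmult_eq_sum_window : Pmult l p q n = ∑ m ∈ window l q n, multinomialTerm p n m := by
  rw [Pmult, window, sum_filter]
  rfl

lemma card_window_le : #(window l q n) ≤ (n + 1) ^ l := by
  refine (card_filter_le _ _).trans_eq ?_
  rw [Fintype.card_piFinset_const, card_range]

lemma window_nonempty (hq : ∀ j, 0 ≤ q j) (hqs : ∑ j, q j = 1) (hn : (l : ℝ) ≤ 0.01 * √n) :
    (window l q n).Nonempty := by
  classical
  obtain ⟨m, hsum, hclose⟩ := exists_sum_eq_abs_sub_le q hq hqs n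
  refine ⟨m, mem_filter.2 ⟨Fintype.mem_piFinset.2 fun j => mem_range.2 ?_, hsum, fun j => ?_⟩⟩
  · exact Nat.lt_succ_of_le (hsum ▸ single_le_sum (fun _ _ => Nat.zero_le _) (mem_univ j))
  · simpa using (hclose j).trans (by simpa using hn)

lemma exists_mem_window_abs_log_Pmult_sub_le (hp : ∀ j, 0 < p j) (hq : ∀ j, 0 ≤ q j)
    (hqs : ∑ j, q j = 1) (hn : (l : ℝ) ≤ 0.01 * √n) :
    ∃ m ∈ window l q n, |log (Pmult l p q n) - n * negRelEntropy p (fun j => m j / n)|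
      ≤ (2 * l + 1) * (1 + log (n + 1)) := by
  obtain ⟨m, hm, hlow, hup⟩ := Finset.exists_le_sum_le_card_mul (window_nonempty hq hqs hn)
    fun m _ => (multinomialTerm_pos hp n m).le
  rw [← Pmult_eq_sum_window] at hlow hup
  refine ⟨m, hm, ?_⟩
  have hT := multinomialTerm_pos hp n m
  have hlog_low : log (multinomialTerm p n m) ≤ log (Pmult l p q n) := log_le_log hT hlow
  have hlog_up : log (Pmult l p q n) ≤ l * log (n + 1) + log (multinomialTerm p n m) :=
    calc log (Pmult l p q n) ≤ log (((n : ℝ) + 1) ^ l * multinomialTerm p n m) := by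
          refine log_le_log (hT.trans_le hlow) (hup.trans ?_)
          gcongr
          exact_mod_cast card_window_le
      _ = l * log (n + 1) + log (multinomialTerm p n m) := by
          rw [log_mul (by positivity) hT.ne', log_pow]
  have hterm := abs_log_multinomialTerm_sub_le hp (mem_filter.1 hm).2.1
  rw [Fintype.card_fin] at hterm
  have hlog_succ : log n ≤ log (n + 1) := by
    rcases Nat.eq_zero_or_pos n with rfl | hn0
    · simp
    · exact log_le_log (by positivity) (by linarith)
  have := log_natCast_nonneg n
  rw [abs_le] at hterm ⊢
  constructor <;> nlinarith

lemma tendsto_div_of_mem_window {x : ℕ → Fin l → ℕ}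
    (hx : ∀ᶠ n in atTop, x n ∈ window l q n) :
    Tendsto (fun n j => (x n j : ℝ) / n) atTop (𝓝 q) := by
  refine tendsto_pi_nhds.2 fun j => tendsto_sub_nhds_zero_iff.1 ?_
  have hlim : Tendsto (fun n : ℕ => 0.01 / √n) atTop (𝓝 0) :=
    tendsto_const_nhds.div_atTop (tendsto_sqrt_atTop.comp tendsto_natCast_atTop_atTop)
  refine squeeze_zero_norm' ?_ hlim
  filter_upwards [hx, eventually_gt_atTop 0] with n hn hn0
  have hclose := (mem_filter.1 hn).2.2 j
  have hn0' : (0 : ℝ) < n := by exact_mod_cast hn0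
  calc ‖(x n j : ℝ) / n - q j‖ = |(x n j : ℝ) - n * q j| / n := by
        rw [Real.norm_eq_abs, div_sub' hn0'.ne', abs_div, abs_of_pos hn0']
    _ ≤ 0.01 * √n / n := by gcongr
    _ = 0.01 / √n := by rw [mul_div_assoc, sqrt_div_self', mul_one_div]

end Window

lemma tendsto_one_add_log_succ_div :
    Tendsto (fun n : ℕ => (1 + log (n + 1)) / n) atTop (𝓝 0) := by
  have hlog : Tendsto (fun n : ℕ => log (n + 1) / n) atTop (𝓝 0) := by
    refine ((tendsto_pow_log_div_mul_add_atTop 1 (-1) 1 one_ne_zero).comp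
      (tendsto_atTop_add_const_right _ 1 tendsto_natCast_atTop_atTop)).congr fun n => ?_
    simp
  simpa [add_div] using (tendsto_const_div_atTop_nhds_zero_nat 1).add hlog

theorem stmt_12_general (l : ℕ) (p q : Fin l → ℝ)
    (hp : ∀ j, p j ∈ Set.Ioo (0 : ℝ) 1)
    (hq : ∀ j, q j ∈ Set.Ioo (0 : ℝ) 1) (hqs : ∑ j, q j = 1) :
    Filter.Tendsto (fun n : ℕ => (1 / n : ℝ) * Real.log (Pmult l p q n)) Filter.atTop
      (nhds (∑ j, q j * Real.log (p j / q j))) := by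
  have hp0 : ∀ j, 0 < p j := fun j => (hp j).1
  have hlarge : ∀ᶠ n : ℕ in atTop, (l : ℝ) ≤ 0.01 * √n :=
    ((tendsto_sqrt_atTop.comp tendsto_natCast_atTop_atTop).eventually_ge_atTop (100 * l)).mono
      fun n hn => by simp only [Function.comp_apply] at hn; linarith
  obtain ⟨x, hx⟩ := (hlarge.mono fun n hn => exists_mem_window_abs_log_Pmult_sub_le hp0
    (fun j => (hq j).1.le) hqs hn).choice
  have hrate : Tendsto (fun n => negRelEntropy p fun j => (x n j : ℝ) / n) atTop
      (𝓝 (∑ j, q j * log (p j / q j))) := by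
    rw [← negRelEntropy_eq_sum_mul_log_div hp0 fun j => (hq j).1]
    exact ((continuous_negRelEntropy p).tendsto q).comp
      (tendsto_div_of_mem_window (hx.mono fun _ h => h.1))
  have herr : Tendsto (fun n : ℕ => (1 / n : ℝ) * log (Pmult l p q n)
      - negRelEntropy p fun j => (x n j : ℝ) / n) atTop (𝓝 0) := by
    refine squeeze_zero_norm' ?_
      (by simpa using tendsto_one_add_log_succ_div.const_mul (2 * l + 1 : ℝ))
    filter_upwards [hx, eventually_gt_atTop 0] with n hn hn0
    have hn0' : (0 : ℝ) < n := by exact_mod_cast hn0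
    rw [Real.norm_eq_abs, one_div_mul_eq_div, div_sub' hn0'.ne', abs_div, abs_of_pos hn0',
      mul_div_assoc']
    gcongr
    exact hn.2
  simpa using herr.add hrate

/-- The large deviation rate of the multinomial distribution:
`(1/n) ln P_n → Σ_j q_j ln (p_j / q_j)`. -/
theorem stmt_12 (l : ℕ) (hl : 2 ≤ l) (p q : Fin l → ℝ)
    (hp : ∀ j, p j ∈ Set.Ioo (0 : ℝ) 1) (hps : ∑ j, p j = 1)
    (hq : ∀ j, q j ∈ Set.Ioo (0 : ℝ) 1) (hqs : ∑ j, q j = 1) :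
    Filter.Tendsto (fun n : ℕ => (1 / n : ℝ) * Real.log (Pmult l p q n)) Filter.atTop
      (nhds (∑ j, q j * Real.log (p j / q j))) :=
  stmt_12_general l p q hp hq hqs
end
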